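/- arXiv:2003.12384 — 5 statements merged into one kernel-verified Lean document; each statement's English description precedes it below -/
import Mathlib

section
/- (Theorem 3.1, lower bound.) Let k ≥ 3 and m ≥ 2 be integers and n = m(k − 1) + 1. Let (d₁, …, dₙ) be any n-tuple of positive integers with Σᵢ dᵢ = km, and set δᵢ = dᵢ(k − 1) and I_δ = log₂(k(k−1)m) − (1/(k(k−1)m))·Σᵢ δᵢ·log₂ δᵢ. Then I_δ ≥ log₂(k(k−1)m) − (1/(k(k−1)m))·[(mk − m)·log₂(mk − m) + (n − 1)(k − 1)·log₂(k − 1)], with equality if and only if (d₁, …, dₙ) is a permutation of (m, 1, 1, …, 1). -/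
/-!
With `δᵢ = (k - 1) dᵢ`, the gap `I_δ - B` equals `(m log m - ∑ dᵢ log dᵢ) / (k m log 2)`.
The excesses `eᵢ = dᵢ - 1 ≥ 0` sum to `m - 1`, and `t ↦ (1 + t) log (1 + t)` is strictly convex
on `[0, ∞)` and vanishes at `0`, hence strictly superadditive. So `∑ dᵢ log dᵢ ≤ m log m`, with
equality iff at most one `eᵢ` is positive, i.e. iff `d` is a permutation of `(m, 1, …, 1)`.
-/

open Real Finset

section Superadditive

variable {f : ℝ → ℝ}

lemma ConvexOn.map_add_map_le_map_add (hf : ConvexOn ℝ (Set.Ici 0) f) (h0 : f 0 = 0)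
    {x y : ℝ} (hx : 0 ≤ x) (hy : 0 ≤ y) : f x + f y ≤ f (x + y) := by
  rcases hx.eq_or_lt with rfl | hx
  · simp [h0]
  rcases hy.eq_or_lt with rfl | hy
  · simp [h0]
  have hmem : x + y ∈ Set.Ici (0 : ℝ) := Set.mem_Ici.2 (by positivity)
  -- convexity on `[0, x + y]` gives `(x + y) f x ≤ x f (x + y)`, and likewise for `y`
  have hfx := hf.secant_mono_aux1 Set.self_mem_Ici hmem hx (by linarith : x < x + y)
  have hfy := hf.secant_mono_aux1 Set.self_mem_Ici hmem hy (by linarith : y < x + y)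
  simp only [h0, sub_zero, mul_zero, zero_add, add_sub_cancel_left, add_sub_cancel_right]
    at hfx hfy
  exact le_of_mul_le_mul_left (by linarith) (by positivity : 0 < x + y)

lemma StrictConvexOn.map_add_map_lt_map_add (hf : StrictConvexOn ℝ (Set.Ici 0) f) (h0 : f 0 = 0)
    {x y : ℝ} (hx : 0 < x) (hy : 0 < y) : f x + f y < f (x + y) := by
  have hmem : x + y ∈ Set.Ici (0 : ℝ) := Set.mem_Ici.2 (by positivity)
  have hfx := hf.secant_strict_mono_aux1 Set.self_mem_Ici hmem hx (by linarith : x < x + y)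
  have hfy := hf.secant_strict_mono_aux1 Set.self_mem_Ici hmem hy (by linarith : y < x + y)
  simp only [h0, sub_zero, mul_zero, zero_add, add_sub_cancel_left, add_sub_cancel_right]
    at hfx hfy
  exact lt_of_mul_lt_mul_left (by linarith) (by positivity : 0 ≤ x + y)

variable {ι : Type*} {s : Finset ι} {e : ι → ℝ}

lemma ConvexOn.sum_map_le_map_sum (hf : ConvexOn ℝ (Set.Ici 0) f) (h0 : f 0 = 0)
    (he : ∀ i ∈ s, 0 ≤ e i) : ∑ i ∈ s, f (e i) ≤ f (∑ i ∈ s, e i) := by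
  have := Finset.le_sum_of_subadditive_on_pred (-f) (0 ≤ ·) (by simp [h0])
    (fun x y hx hy => by simpa [add_comm] using hf.map_add_map_le_map_add h0 hx hy)
    (fun x y hx hy => add_nonneg hx hy) e he
  simpa [Finset.sum_neg_distrib] using this

lemma StrictConvexOn.sum_map_lt_map_sum (hf : StrictConvexOn ℝ (Set.Ici 0) f) (h0 : f 0 = 0)
    (he : ∀ i ∈ s, 0 ≤ e i) {i j : ι} (hi : i ∈ s) (hj : j ∈ s) (hij : i ≠ j)
    (hei : 0 < e i) (hej : 0 < e j) : ∑ x ∈ s, f (e x) < f (∑ x ∈ s, e x) := by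
  classical
  have he' : ∀ x ∈ s.erase i, 0 ≤ e x := fun x hx => he x (mem_of_mem_erase hx)
  have hrest : 0 < ∑ x ∈ s.erase i, e x :=
    hej.trans_le (single_le_sum he' (mem_erase.2 ⟨hij.symm, hj⟩))
  rw [← add_sum_erase s _ hi, ← add_sum_erase s e hi]
  calc f (e i) + ∑ x ∈ s.erase i, f (e x)
      ≤ f (e i) + f (∑ x ∈ s.erase i, e x) := by
        gcongr; exact hf.convexOn.sum_map_le_map_sum h0 he'
    _ < f (e i + ∑ x ∈ s.erase i, e x) := hf.map_add_map_lt_map_add h0 hei hrest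

end Superadditive

lemma strictConvexOn_one_add_mul_log :
    StrictConvexOn ℝ (Set.Ici 0) (fun t : ℝ => (1 + t) * log (1 + t)) :=
  (strictConvexOn_mul_log.translate_right 1).subset
    (fun t (ht : 0 ≤ t) => show (0 : ℝ) ≤ 1 + t by linarith) (convex_Ici 0)

section

variable {ι : Type*} [Fintype ι] {d : ι → ℕ} {M : ℕ}

lemma one_add_sum_natCast_sub_one (hsum : ∑ i, d i + 1 = M + Fintype.card ι) :
    1 + ∑ i, ((d i : ℝ) - 1) = M := by
  have hsumR : (∑ i, d i : ℝ) + 1 = M + Fintype.card ι := by exact_mod_cast hsum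
  rw [sum_sub_distrib, sum_const, card_univ, nsmul_one]
  linarith

lemma sum_natCast_mul_log_le (hd : ∀ i, 1 ≤ d i) (hsum : ∑ i, d i + 1 = M + Fintype.card ι) :
    ∑ i, (d i : ℝ) * log (d i) ≤ M * log M := by
  have := strictConvexOn_one_add_mul_log.convexOn.sum_map_le_map_sum (by simp)
    (s := univ) (e := fun i => (d i : ℝ) - 1) (fun i _ => sub_nonneg.2 (Nat.one_le_cast.2 (hd i)))
  simpa only [add_sub_cancel, one_add_sum_natCast_sub_one hsum] using this

lemma sum_natCast_mul_log_eq_iff [DecidableEq ι] (hd : ∀ i, 1 ≤ d i) (hM : 2 ≤ M)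
    (hsum : ∑ i, d i + 1 = M + Fintype.card ι) :
    ∑ i, (d i : ℝ) * log (d i) = M * log M ↔ ∃ i₀, ∀ i, d i = if i = i₀ then M else 1 := by
  constructor
  · intro heq
    have hle_one : ∀ i j, i ≠ j → 2 ≤ d i → d j = 1 := by
      intro i j hij hi
      by_contra hj
      have := strictConvexOn_one_add_mul_log.sum_map_lt_map_sum (by simp)
        (s := univ) (e := fun i => (d i : ℝ) - 1) (fun i _ => sub_nonneg.2 (Nat.one_le_cast.2 (hd i)))
        (mem_univ i) (mem_univ j) hij (sub_pos.2 (Nat.one_lt_cast.2 hi))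
        (sub_pos.2 (Nat.one_lt_cast.2 ((hd j).lt_of_ne' hj)))
      simp only [add_sub_cancel, one_add_sum_natCast_sub_one hsum, heq] at this
      exact lt_irrefl _ this
    obtain ⟨i₀, hi₀⟩ : ∃ i₀, 2 ≤ d i₀ := by
      by_contra! h
      have hall : ∑ i, d i = Fintype.card ι := by
        simp [fun i => le_antisymm (Nat.lt_succ_iff.1 (h i)) (hd i)]
      omega
    have hrest : ∀ i ∈ univ.erase i₀, d i = 1 := fun i hi =>
      hle_one i₀ i (ne_of_mem_erase hi).symm hi₀
    have hdi₀ : d i₀ = M := by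
      rw [← add_sum_erase _ _ (mem_univ i₀), sum_congr rfl hrest, sum_const, card_erase_of_mem
        (mem_univ i₀), card_univ, smul_eq_mul, mul_one] at hsum
      have : 0 < Fintype.card ι := Fintype.card_pos_iff.2 ⟨i₀⟩
      omega
    exact ⟨i₀, fun i => by
      split_ifs with h
      · exact h ▸ hdi₀
      · exact hrest i (mem_erase.2 ⟨h, mem_univ i⟩)⟩
  · rintro ⟨i₀, hd⟩
    rw [sum_eq_single i₀ (fun i _ hi => by simp [hd i, hi]) (by simp), hd i₀, if_pos rfl]

end

lemma sum_mul_const_mul_logb {ι : Type*} (s : Finset ι) {x : ι → ℝ} {c : ℝ} (b : ℝ)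
    (hx : ∀ i ∈ s, x i ≠ 0) (hc : c ≠ 0) :
    ∑ i ∈ s, x i * c * logb b (x i * c) =
      c * (∑ i ∈ s, x i * log (x i) + (∑ i ∈ s, x i) * log c) / log b := by
  calc ∑ i ∈ s, x i * c * logb b (x i * c)
      = ∑ i ∈ s, c * (x i * log (x i) + x i * log c) / log b :=
        sum_congr rfl fun i hi => by rw [logb, log_mul (hx i hi) hc]; ring
    _ = _ := by rw [← sum_div, ← mul_sum, sum_add_distrib, ← sum_mul]

lemma Fin.exists_perm_eq_ite_val_eq_zero_iff {n : ℕ} [NeZero n] {α : Type*} (d : Fin n → α)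
    (a b : α) :
    (∃ σ : Equiv.Perm (Fin n), ∀ i, d i = if ((σ i : Fin n) : ℕ) = 0 then a else b) ↔
      ∃ i₀, ∀ i, d i = if i = i₀ then a else b := by
  simp only [Fin.val_eq_zero_iff]
  constructor
  · rintro ⟨σ, hσ⟩
    exact ⟨σ.symm 0, fun i => by simp only [hσ i, Equiv.eq_symm_apply]⟩
  · rintro ⟨i₀, hi₀⟩
    exact ⟨Equiv.swap i₀ 0, fun i => by
      simp only [hi₀ i, Equiv.swap_apply_eq_iff, Equiv.swap_apply_right]⟩

/-- Theorem 3.1, lower bound: among `k`-uniform hypertree degree sequences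
(`n = m(k-1)+1` positive integers `dᵢ` with `Σ dᵢ = km`, Laplacian degrees
`δᵢ = dᵢ(k-1)`), the entropy `I_δ` is at least the hyperstar value, with equality
iff `(d₁, …, dₙ)` is a permutation of `(m, 1, …, 1)`. -/
theorem stmt_8 (k m n : ℕ) (hk : 3 ≤ k) (hm : 2 ≤ m) (hn : n = m * (k - 1) + 1)
    (d : Fin n → ℕ) (hd : ∀ i, 1 ≤ d i) (hsum : ∑ i, d i = k * m)
    (δ : Fin n → ℝ) (hδ : ∀ i, δ i = (d i : ℝ) * ((k : ℝ) - 1))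
    (Iδ : ℝ)
    (hI : Iδ = Real.logb 2 ((k : ℝ) * ((k : ℝ) - 1) * (m : ℝ)) -
      (1 / ((k : ℝ) * ((k : ℝ) - 1) * (m : ℝ))) * ∑ i, δ i * Real.logb 2 (δ i))
    (B : ℝ)
    (hB : B = Real.logb 2 ((k : ℝ) * ((k : ℝ) - 1) * (m : ℝ)) -
      (1 / ((k : ℝ) * ((k : ℝ) - 1) * (m : ℝ))) *
        (((m : ℝ) * (k : ℝ) - (m : ℝ)) * Real.logb 2 ((m : ℝ) * (k : ℝ) - (m : ℝ)) +
          ((n : ℝ) - 1) * ((k : ℝ) - 1) * Real.logb 2 ((k : ℝ) - 1))) :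
    B ≤ Iδ ∧
    (Iδ = B ↔ ∃ σ : Equiv.Perm (Fin n), ∀ i, d i = if ((σ i : Fin n) : ℕ) = 0 then m else 1) := by
  have hk1 : (0 : ℝ) < k - 1 := by
    have : (3 : ℝ) ≤ k := by exact_mod_cast hk
    linarith
  have hm0 : (0 : ℝ) < m := by exact_mod_cast (by omega : 0 < m)
  have hnR : (n : ℝ) = m * (k - 1) + 1 := by
    rw [hn]; push_cast [Nat.cast_sub (by omega : 1 ≤ k)]; ring
  have hsumR : ∑ i, (d i : ℝ) = k * m := by exact_mod_cast hsum
  have hcount : ∑ i, d i + 1 = m + Fintype.card (Fin n) := by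
    rw [hsum, Fintype.card_fin, hn]
    zify [(by omega : 1 ≤ k)]
    ring
  have hstar : ((m : ℝ) * k - m) * logb 2 ((m : ℝ) * k - m) +
      ((n : ℝ) - 1) * (k - 1) * logb 2 ((k : ℝ) - 1) =
        (k - 1) * (m * log m + k * m * log (k - 1)) / log 2 := by
    rw [show (m : ℝ) * k - m = m * (k - 1) by ring, logb, logb, log_mul hm0.ne' hk1.ne', hnR]
    ring
  have hgap : Iδ - B = (m * log m - ∑ i, (d i : ℝ) * log (d i)) / (k * m * log 2) := by
    simp only [hI, hB, hδ, hstar, sum_mul_const_mul_logb univ (2 : ℝ)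
      (fun i _ => Nat.cast_ne_zero.2 (Nat.one_le_iff_ne_zero.1 (hd i))) hk1.ne', hsumR]
    field_simp
    ring
  have hden : 0 < (k : ℝ) * m * log 2 := by
    have : (0 : ℝ) < k := by linarith
    positivity
  have : NeZero n := ⟨by omega⟩
  refine ⟨?_, ?_⟩
  · rw [← sub_nonneg, hgap]
    exact div_nonneg (sub_nonneg.2 (sum_natCast_mul_log_le hd hcount)) hden.le
  · rw [← sub_eq_zero, hgap, div_eq_zero_iff, or_iff_left hden.ne', sub_eq_zero, eq_comm,
      sum_natCast_mul_log_eq_iff hd hm hcount, Fin.exists_perm_eq_ite_val_eq_zero_iff]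
end

section
/- (Theorem 3.1, upper bound.) Let k ≥ 3 and m ≥ 2 be integers and n = m(k − 1) + 1. Let (d₁, …, dₙ) be any n-tuple of positive integers with Σᵢ dᵢ = km, and set δᵢ = dᵢ(k − 1) and I_δ = log₂(k(k−1)m) − (1/(k(k−1)m))·Σᵢ δᵢ·log₂ δᵢ. Then I_δ ≤ log₂(k(k−1)m) − (1/(k(k−1)m))·[(m − 1)(2k − 2)·log₂(2k − 2) + (n − m + 1)(k − 1)·log₂(k − 1)], with equality if and only if (d₁, …, dₙ) is a permutation of the tuple consisting of m − 1 entries equal to 2 and n − m + 1 entries equal to 1. -/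
/-!
Since `Σ δᵢ = k(k-1)m` is fixed, `I_δ` depends on the degrees only through `S = Σ dᵢ log₂ dᵢ`,
and `B - I_δ = (S - 2(m-1)) / (km)`. For a positive integer `a`, `a log₂ a ≥ 2(a-1)` with
equality exactly when `a ∈ {1, 2}` (the convex function `a log₂ a - 2(a-1)` vanishes at `1`
and `2`). Summing, with `Σ 2(dᵢ-1) = 2(km - n) = 2(m-1)`, gives `S ≥ 2(m-1)`, with equality iff
every `dᵢ ≤ 2`; as the `dᵢ` sum to `n + (m-1)`, that means exactly `m-1` of them equal `2`.
-/

open Real Finset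

lemma two_mul_sub_one_lt_mul_logb_two {a : ℕ} (ha : 3 ≤ a) :
    2 * ((a : ℝ) - 1) < a * logb 2 a := by
  obtain rfl | ha4 := ha.eq_or_lt
  · have h : logb 2 ((2 : ℝ) ^ 4) < logb 2 ((3 : ℝ) ^ 3) :=
      logb_lt_logb one_lt_two (by norm_num) (by norm_num)
    rw [logb_pow, logb_pow, logb_self_eq_one one_lt_two] at h
    norm_num at h ⊢
    linarith
  · have h4 : (4 : ℝ) ≤ a := by exact_mod_cast ha4
    have hlog : 2 ≤ logb 2 (a : ℝ) := by
      calc (2 : ℝ) = logb 2 (2 ^ 2) := by rw [logb_pow, logb_self_eq_one one_lt_two]; norm_num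
        _ ≤ logb 2 a := logb_le_logb_of_le one_lt_two (by norm_num) (by linarith)
    nlinarith

lemma two_mul_sub_one_eq_mul_logb_two_iff {a : ℕ} (ha : 1 ≤ a) :
    2 * ((a : ℝ) - 1) = a * logb 2 a ↔ a ≤ 2 := by
  refine ⟨fun h => ?_, fun h => ?_⟩
  · by_contra! h3
    exact (two_mul_sub_one_lt_mul_logb_two h3).ne h
  · interval_cases a <;> norm_num

lemma two_mul_sub_one_le_mul_logb_two {a : ℕ} (ha : 1 ≤ a) :
    2 * ((a : ℝ) - 1) ≤ a * logb 2 a := by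
  rcases le_or_gt a 2 with h | h
  · exact ((two_mul_sub_one_eq_mul_logb_two_iff ha).2 h).le
  · exact (two_mul_sub_one_lt_mul_logb_two h).le

lemma sum_mul_const_mul_logb_mul_const {ι : Type*} (s : Finset ι) (b : ℝ) {x : ι → ℝ}
    (hx : ∀ i ∈ s, x i ≠ 0) {c : ℝ} (hc : c ≠ 0) :
    ∑ i ∈ s, x i * c * logb b (x i * c) =
      c * (∑ i ∈ s, x i * logb b (x i) + logb b c * ∑ i ∈ s, x i) := by
  rw [mul_sum, ← sum_add_distrib, mul_sum]
  refine sum_congr rfl fun i hi => ?_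
  rw [logb_mul (hx i hi) hc]
  ring

lemma Fin.exists_perm_iff_val_lt_card {n : ℕ} (p : Fin n → Prop) [DecidablePred p] :
    ∃ σ : Equiv.Perm (Fin n), ∀ i, p i ↔ (σ i : ℕ) < #{i | p i} := by
  have hcard : Fintype.card {i // p i} = Fintype.card {i : Fin n // (i : ℕ) < #{i | p i}} := by
    rw [Fintype.card_subtype, Fintype.card_subtype, Fin.card_filter_val_lt]
    exact (min_eq_right ((card_le_univ _).trans_eq (Fintype.card_fin n))).symm
  let e := Fintype.equivOfCardEq hcard
  refine ⟨e.extendSubtype, fun i => ⟨fun h => e.extendSubtype_mem i h, fun h => ?_⟩⟩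
  by_contra h'
  exact e.extendSubtype_not_mem i h' h

lemma sum_eq_card_add_card_filter_eq_two {ι : Type*} (s : Finset ι) {d : ι → ℕ}
    (hd : ∀ i ∈ s, 1 ≤ d i ∧ d i ≤ 2) :
    ∑ i ∈ s, d i = #s + #{i ∈ s | d i = 2} := by
  rw [card_eq_sum_ones, card_filter, ← sum_add_distrib]
  refine sum_congr rfl fun i hi => ?_
  have := hd i hi
  split_ifs <;> omega

lemma forall_le_two_iff_exists_perm {n r : ℕ} {d : Fin n → ℕ} (hd : ∀ i, 1 ≤ d i)
    (hsum : ∑ i, d i = n + r) :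
    (∀ i, d i ≤ 2) ↔ ∃ σ : Equiv.Perm (Fin n), ∀ i, d i = if (σ i : ℕ) < r then 2 else 1 := by
  refine ⟨fun h2 => ?_, fun ⟨σ, hσ⟩ i => by rw [hσ i]; split_ifs <;> omega⟩
  have hr : #{i | d i = 2} = r := by
    have := sum_eq_card_add_card_filter_eq_two univ fun i _ => ⟨hd i, h2 i⟩
    rw [card_univ, Fintype.card_fin] at this
    omega
  obtain ⟨σ, hσ⟩ := Fin.exists_perm_iff_val_lt_card fun i => d i = 2
  refine ⟨σ, fun i => ?_⟩
  rw [hr] at hσ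
  have := hd i; have := h2 i; have := hσ i
  split_ifs <;> omega

lemma sum_laplacian_mul_logb_sub_loosePath {k m n : ℕ} (hk : 2 ≤ k) (hn : n = m * (k - 1) + 1)
    {d : Fin n → ℕ} (hd : ∀ i, 1 ≤ d i) (hsum : ∑ i, d i = k * m) :
    ∑ i, (d i : ℝ) * (k - 1) * logb 2 ((d i : ℝ) * (k - 1)) -
        ((m - 1) * (2 * k - 2) * logb 2 (2 * k - 2) + (n - m + 1) * (k - 1) * logb 2 (k - 1)) =
      (k - 1) * (∑ i, (d i : ℝ) * logb 2 (d i) - ∑ i, 2 * ((d i : ℝ) - 1)) := by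
  have hk1 : (k : ℝ) - 1 ≠ 0 := sub_ne_zero.2 (by exact_mod_cast (by omega : k ≠ 1))
  have hN : (n : ℝ) = m * (k - 1) + 1 := by
    rw [hn, Nat.cast_add, Nat.cast_mul, Nat.cast_sub (by omega), Nat.cast_one]
  have hsumR : ∑ i, (d i : ℝ) = k * m := by exact_mod_cast hsum
  rw [sum_mul_const_mul_logb_mul_const univ 2 (fun i _ => (Nat.cast_pos.2 (hd i)).ne') hk1,
    ← mul_sum, sum_sub_distrib, sum_const, card_univ, Fintype.card_fin, nsmul_one, hsumR, hN,
    show 2 * (k : ℝ) - 2 = 2 * (k - 1) by ring, logb_mul two_ne_zero hk1,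
    logb_self_eq_one one_lt_two]
  ring

/-- Theorem 3.1, upper bound: among `k`-uniform hypertree degree sequences
(`n = m(k-1)+1` positive integers `dᵢ` with `Σ dᵢ = km`, Laplacian degrees
`δᵢ = dᵢ(k-1)`), the entropy `I_δ` is at most the loose-path value, with equality
iff `(d₁, …, dₙ)` is a permutation of the tuple with `m - 1` entries `2` and
`n - m + 1` entries `1`. -/
theorem stmt_9 (k m n : ℕ) (hk : 3 ≤ k) (hm : 2 ≤ m) (hn : n = m * (k - 1) + 1)
    (d : Fin n → ℕ) (hd : ∀ i, 1 ≤ d i) (hsum : ∑ i, d i = k * m)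
    (δ : Fin n → ℝ) (hδ : ∀ i, δ i = (d i : ℝ) * ((k : ℝ) - 1))
    (Iδ : ℝ)
    (hI : Iδ = Real.logb 2 ((k : ℝ) * ((k : ℝ) - 1) * (m : ℝ)) -
      (1 / ((k : ℝ) * ((k : ℝ) - 1) * (m : ℝ))) * ∑ i, δ i * Real.logb 2 (δ i))
    (B : ℝ)
    (hB : B = Real.logb 2 ((k : ℝ) * ((k : ℝ) - 1) * (m : ℝ)) -
      (1 / ((k : ℝ) * ((k : ℝ) - 1) * (m : ℝ))) *
        (((m : ℝ) - 1) * (2 * (k : ℝ) - 2) * Real.logb 2 (2 * (k : ℝ) - 2) +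
          ((n : ℝ) - (m : ℝ) + 1) * ((k : ℝ) - 1) * Real.logb 2 ((k : ℝ) - 1))) :
    Iδ ≤ B ∧
    (Iδ = B ↔ ∃ σ : Equiv.Perm (Fin n), ∀ i, d i = if ((σ i : Fin n) : ℕ) < m - 1 then 2 else 1) := by
  have hk1 : (0 : ℝ) < k - 1 := by
    have : (3 : ℝ) ≤ k := by exact_mod_cast hk
    linarith
  have hm0 : (0 : ℝ) < m := by exact_mod_cast (by omega : 0 < m)
  have hgap : B - Iδ =
      (∑ i, (d i : ℝ) * logb 2 (d i) - ∑ i, 2 * ((d i : ℝ) - 1)) / (k * m) := by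
    rw [hI, hB, sum_congr rfl fun i _ => by rw [hδ i], sub_sub_sub_cancel_left, ← mul_sub,
      sum_laplacian_mul_logb_sub_loosePath (by omega) hn hd hsum]
    field_simp
  have hle : ∀ i ∈ univ, 2 * ((d i : ℝ) - 1) ≤ d i * logb 2 (d i) :=
    fun i _ => two_mul_sub_one_le_mul_logb_two (hd i)
  have hsum' : ∑ i, d i = n + (m - 1) := by
    obtain ⟨j, rfl⟩ : ∃ j, k = j + 1 := ⟨k - 1, by omega⟩
    obtain ⟨l, rfl⟩ : ∃ l, m = l + 1 := ⟨m - 1, by omega⟩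
    rw [hsum, hn, Nat.add_sub_cancel, Nat.add_sub_cancel]
    ring
  refine ⟨sub_nonneg.1 (hgap ▸ div_nonneg (sub_nonneg.2 (sum_le_sum hle)) (by positivity)), ?_⟩
  rw [← forall_le_two_iff_exists_perm hd hsum', eq_comm, ← sub_eq_zero, hgap,
    div_eq_zero_iff, or_iff_left (by positivity), sub_eq_zero, eq_comm, sum_eq_sum_iff_of_le hle]
  simp only [mem_univ, true_implies, two_mul_sub_one_eq_mul_logb_two_iff (hd _)]
end

section
/- Let n, a, r be nonnegative integers with r ∈ {0, 1, 2} and a + 1 ≤ n, and set t = 3a + r. Then the n-tuple consisting of a entries equal to 4, one entry equal to r + 1, and n − a − 1 entries equal to 1 majorizes every n-tuple of integers, each lying between 1 and 4, with sum n + t. (This majorization underlies the extremality of the chemical hypertree family T* in Lemma 3.5, with t = m − 1.) -/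
/-- The non-increasing rearrangement of an `n`-tuple of reals. -/
noncomputable def sortDesc {n : ℕ} (x : Fin n → ℝ) : Fin n → ℝ :=
  fun i => x (Tuple.sort x i.rev)

/-- `y` majorizes `x`: the tuples have equal sums and, after sorting both in
non-increasing order, every initial partial sum of `y` is at least the corresponding
initial partial sum of `x`. -/
def Majorizes {n : ℕ} (y x : Fin n → ℝ) : Prop :=
  (∑ i, x i = ∑ i, y i) ∧
  ∀ k : ℕ,
    ∑ i ∈ Finset.univ.filter (fun i : Fin n => (i : ℕ) < k), sortDesc x i ≤
      ∑ i ∈ Finset.univ.filter (fun i : Fin n => (i : ℕ) < k), sortDesc y i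


/-
The tuple `y = (4, …, 4, r + 1, 1, …, 1)` is non-increasing, so it is its own sorted
rearrangement. Each of its prefix sums is as large as a prefix sum of an admissible tuple can
possibly be: a prefix of length `k ≤ a` consists of `4`s only, the largest allowed entry, while a
longer prefix is followed by `1`s only, the smallest allowed entry, so it equals the total sum
minus the least possible contribution of the remaining entries.
-/

open Finset

lemma sortDesc_eq_self_of_antitone {n : ℕ} {y : Fin n → ℝ} (hy : Antitone y) :
    sortDesc y = y := by
  have hrev : Monotone (y ∘ (Fin.revPerm : Equiv.Perm (Fin n))) :=
    fun _ _ hij => hy (by simpa using Fin.rev_le_rev.mpr hij)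
  funext i
  simpa [sortDesc] using congrFun (Tuple.unique_monotone (Tuple.monotone_sort y) hrev) i.rev

lemma sum_sortDesc {n : ℕ} (x : Fin n → ℝ) : ∑ i, sortDesc x i = ∑ i, x i :=
  Fintype.sum_equiv ((Fin.revPerm : Equiv.Perm (Fin n)).trans (Tuple.sort x)) _ _
    (fun _ => rfl)

theorem majorizes_of_prefix_extremal {n : ℕ} {x y : Fin n → ℝ} {b c : ℝ}
    (hx : ∀ i, x i ∈ Set.Icc b c) (hy : Antitone y) (hsum : ∑ i, x i = ∑ i, y i)
    (hext : ∀ k : ℕ, (∀ i : Fin n, (i : ℕ) < k → y i = c) ∨ (∀ i : Fin n, k ≤ (i : ℕ) → y i = b)) :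
    Majorizes y x := by
  refine ⟨hsum, fun k => ?_⟩
  rw [sortDesc_eq_self_of_antitone hy]
  set S := univ.filter fun i : Fin n => (i : ℕ) < k
  have hx' : ∀ i, sortDesc x i ∈ Set.Icc b c := fun _ => hx _
  rcases hext k with hmax | hmin
  · calc ∑ i ∈ S, sortDesc x i ≤ ∑ i ∈ S, c := sum_le_sum fun i _ => (hx' i).2
      _ = ∑ i ∈ S, y i := sum_congr rfl fun i hi => (hmax i (mem_filter.mp hi).2).symm
  · have hcompl : ∑ i ∈ Sᶜ, y i ≤ ∑ i ∈ Sᶜ, sortDesc x i :=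
      sum_le_sum fun i hi => by
        rw [hmin i (by simpa [S] using hi)]
        exact (hx' i).1
    have htotal := sum_add_sum_compl S (sortDesc x)
    have htotal' := sum_add_sum_compl S y
    rw [sum_sortDesc, hsum] at htotal
    linarith

def fourThenOnes (n a : ℕ) (s : ℝ) : Fin n → ℝ :=
  fun i => if (i : ℕ) < a then 4 else if (i : ℕ) = a then s else 1

lemma antitone_fourThenOnes {n a : ℕ} {s : ℝ} (hs : s ∈ Set.Icc 1 4) :
    Antitone (fourThenOnes n a s) := by
  intro i j hij
  have hij : (i : ℕ) ≤ j := hij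
  obtain ⟨hs1, hs4⟩ := hs
  simp only [fourThenOnes]
  split_ifs <;> first | omega | linarith

lemma sum_fourThenOnes (a m : ℕ) (s : ℝ) :
    ∑ i, fourThenOnes (a + 1 + m) a s i = 4 * a + s + m := by
  simp only [fourThenOnes]
  rw [Fin.sum_univ_eq_sum_range (fun i => if i < a then (4 : ℝ) else if i = a then s else 1),
    sum_range_add, sum_range_succ]
  have hlt : ∀ i ∈ range a, (if i < a then (4 : ℝ) else if i = a then s else 1) = 4 :=
    fun i hi => if_pos (mem_range.mp hi)
  have hgt : ∀ i ∈ range m,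
      (if a + 1 + i < a then (4 : ℝ) else if a + 1 + i = a then s else 1) = 1 :=
    fun i _ => by rw [if_neg (by omega), if_neg (by omega)]
  rw [sum_congr rfl hlt, sum_congr rfl hgt]
  simp only [sum_const, card_range, nsmul_eq_mul, lt_self_iff_false, ↓reduceIte, mul_one]
  ring

lemma fourThenOnes_prefix_extremal (n a : ℕ) (s : ℝ) (k : ℕ) :
    (∀ i : Fin n, (i : ℕ) < k → fourThenOnes n a s i = 4) ∨
      (∀ i : Fin n, k ≤ (i : ℕ) → fourThenOnes n a s i = 1) := by
  rcases le_or_gt k a with hka | hka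
  · exact Or.inl fun i hi => if_pos (by omega)
  · exact Or.inr fun i hi => by
      simp only [fourThenOnes]
      rw [if_neg (by omega), if_neg (by omega)]

/-- For `r ∈ {0, 1, 2}`, `a + 1 ≤ n` and `t = 3a + r`, the `n`-tuple with `a` entries
equal to `4`, one entry equal to `r + 1`, and `n - a - 1` entries equal to `1`
majorizes every `n`-tuple of integers between `1` and `4` with sum `n + t`. -/
theorem stmt_12 (n a r : ℕ) (hr : r ≤ 2) (ha : a + 1 ≤ n) (t : ℕ) (ht : t = 3 * a + r)
    (d : Fin n → ℕ) (hd : ∀ i, 1 ≤ d i ∧ d i ≤ 4) (hsum : ∑ i, d i = n + t) :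
    Majorizes
      (fun i : Fin n => if (i : ℕ) < a then (4 : ℝ) else if (i : ℕ) = a then (r : ℝ) + 1 else 1)
      (fun i => (d i : ℝ)) := by
  obtain ⟨m, rfl⟩ := Nat.exists_eq_add_of_le ha
  have hr' : (r : ℝ) ≤ 2 := by exact_mod_cast hr
  have hbounds : ∀ i, (d i : ℝ) ∈ Set.Icc 1 4 := fun i =>
    ⟨by exact_mod_cast (hd i).1, by exact_mod_cast (hd i).2⟩
  have hsums : ∑ i, (d i : ℝ) = ∑ i, fourThenOnes (a + 1 + m) a (r + 1) i := by
    rw [sum_fourThenOnes, ← Nat.cast_sum, hsum, ht]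
    push_cast
    ring
  exact majorizes_of_prefix_extremal hbounds
    (antitone_fourThenOnes ⟨le_add_of_nonneg_left r.cast_nonneg, by linarith⟩) hsums
    (fourThenOnes_prefix_extremal _ a _)
end

section
/- (Lemma 3.5, sequence form.) Let k ≥ 3 and m ≥ 2 be integers, n = m(k − 1) + 1, and write m − 1 = 3a + r with a ≥ 0 and r ∈ {0, 1, 2}. Let (d₁, …, dₙ) be any n-tuple of integers with 1 ≤ dᵢ ≤ 4 for all i and Σᵢ dᵢ = km, and set δᵢ = dᵢ(k − 1). Then Σᵢ δᵢ·log₂ δᵢ ≤ a(4k − 4)·log₂(4k − 4) + (r + 1)(k − 1)·log₂((r + 1)(k − 1)) + (n − a − 1)(k − 1)·log₂(k − 1), with equality if and only if (d₁, …, dₙ) is a permutation of the tuple consisting of a entries equal to 4, one entry equal to r + 1, and n − a − 1 entries equal to 1. -/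
/-!
Put `g t = t(k-1) log₂(t(k-1))`, so that `Σ δᵢ log₂ δᵢ = Σ g(dᵢ)` depends only on the numbers
`c₁, c₂, c₃` of vertices of degree `2, 3, 4`, and `Σ dᵢ = km` becomes `c₁ + 2c₂ + 3c₃ = m - 1`.
Strict convexity of `t log t` makes every merge of excess degree profitable (two `2`s into a `3`,
two `3`s into a `2` and a `4`, a `2` and a `3` into a `4`), and the only profile admitting no
merge is the greedy one: `a` vertices of degree `4` and one of degree `r + 1`.
-/

open Finset Real

theorem two_mul_mul_logb_lt_add {b x z : ℝ} (hb : 1 < b) (hx : 0 ≤ x) (hz : 0 < z) :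
    2 * ((x + z) * logb b (x + z)) < x * logb b x + (x + 2 * z) * logb b (x + 2 * z) := by
  have hconv := strictConvexOn_mul_log.2 (Set.mem_Ici.2 hx)
    (Set.mem_Ici.2 (by linarith : 0 ≤ x + 2 * z)) (by linarith : x ≠ x + 2 * z)
    (by norm_num : (0 : ℝ) < 1 / 2) (by norm_num : (0 : ℝ) < 1 / 2) (by norm_num)
  have hmid : (1 / 2 : ℝ) • x + (1 / 2 : ℝ) • (x + 2 * z) = x + z := by
    simp only [smul_eq_mul]
    ring
  rw [hmid] at hconv
  simp only [smul_eq_mul] at hconv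
  simp only [logb, mul_div_assoc']
  rw [← add_div, div_lt_div_iff_of_pos_right (log_pos hb)]
  linarith

theorem two_mul_natCast_mul_logb_lt {b K : ℝ} (hb : 1 < b) (hK : 0 < K) (j : ℕ) :
    2 * (((j + 1 : ℕ) : ℝ) * K * logb b ((j + 1 : ℕ) * K)) <
      j * K * logb b (j * K) + ((j + 2 : ℕ) : ℝ) * K * logb b ((j + 2 : ℕ) * K) := by
  convert two_mul_mul_logb_lt_add hb (by positivity : 0 ≤ j * K) hK using 4 <;> push_cast <;> ring

theorem le_and_eq_iff_of_lt {S S' T : ℝ} {P : Prop} (hP : ¬P) (hlt : S < S') (hle : S' ≤ T) :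
    S ≤ T ∧ (S = T ↔ P) :=
  ⟨(hlt.trans_le hle).le, iff_of_false (hlt.trans_le hle).ne hP⟩

theorem parts_sum_le_and_eq_iff {A : ℕ → ℝ} (h0 : A 0 = 0) (h1 : 2 * A 1 < A 0 + A 2)
    (h2 : 2 * A 2 < A 1 + A 3) {a r : ℕ} (hr : r ≤ 2) (c₁ c₂ c₃ : ℕ)
    (hc : c₁ + 2 * c₂ + 3 * c₃ = 3 * a + r) :
    c₁ * A 1 + c₂ * A 2 + c₃ * A 3 ≤ a * A 3 + A r ∧
      (c₁ * A 1 + c₂ * A 2 + c₃ * A 3 = a * A 3 + A r ↔ c₁ + 2 * c₂ = r ∧ c₁ ≤ 1 ∧ c₃ = a) := by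
  by_cases two_ones : 2 ≤ c₁
  · obtain ⟨c₁, rfl⟩ := Nat.exists_eq_add_of_le' two_ones
    refine le_and_eq_iff_of_lt (by omega) ?_
      (parts_sum_le_and_eq_iff h0 h1 h2 hr c₁ (c₂ + 1) c₃ (by omega)).1
    push_cast
    linarith
  by_cases two_twos : 2 ≤ c₂
  · obtain ⟨c₂, rfl⟩ := Nat.exists_eq_add_of_le' two_twos
    refine le_and_eq_iff_of_lt (by omega) ?_
      (parts_sum_le_and_eq_iff h0 h1 h2 hr (c₁ + 1) c₂ (c₃ + 1) (by omega)).1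
    push_cast
    linarith
  by_cases one_and_two : c₁ = 1 ∧ c₂ = 1
  · obtain ⟨rfl, rfl⟩ := one_and_two
    refine le_and_eq_iff_of_lt (by omega) ?_
      (parts_sum_le_and_eq_iff h0 h1 h2 hr 0 0 (c₃ + 1) (by omega)).1
    push_cast
    linarith
  have greedy : c₁ + 2 * c₂ = r ∧ c₁ ≤ 1 ∧ c₃ = a := by omega
  have heq : c₁ * A 1 + c₂ * A 2 + c₃ * A 3 = a * A 3 + A r := by
    obtain ⟨rfl, -, rfl⟩ := greedy
    interval_cases c₁ <;> interval_cases c₂ <;> simp_all [add_comm]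
  exact ⟨heq.le, iff_of_true heq greedy⟩
termination_by 2 * c₁ + 3 * c₂

theorem sum_comp_of_mem_Icc {ι M : Type*} [Fintype ι] [AddCommMonoid M] {d : ι → ℕ}
    (hd : ∀ i, d i ∈ Icc 1 4) (f : ℕ → M) :
    ∑ i, f (d i) = #{i | d i = 1} • f 1 + #{i | d i = 2} • f 2 + #{i | d i = 3} • f 3 +
      #{i | d i = 4} • f 4 := by
  rw [← sum_fiberwise_of_maps_to' (fun i _ => hd i)]
  simp only [sum_const]
  rw [show (Icc 1 4 : Finset ℕ) = {1, 2, 3, 4} from rfl]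
  simp [add_assoc]

theorem card_fiber_add_of_mem_Icc {ι : Type*} [Fintype ι] {d : ι → ℕ} (hd : ∀ i, d i ∈ Icc 1 4) :
    #{i | d i = 1} + #{i | d i = 2} + #{i | d i = 3} + #{i | d i = 4} = Fintype.card ι := by
  simpa using (sum_comp_of_mem_Icc hd fun _ => (1 : ℕ)).symm

theorem sum_comp_eq_card_mul_add_of_mem_Icc {ι : Type*} [Fintype ι] {d : ι → ℕ}
    (hd : ∀ i, d i ∈ Icc 1 4) (g : ℕ → ℝ) :
    ∑ i, g (d i) = Fintype.card ι * g 1 + (#{i | d i = 2} * (g 2 - g 1) +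
      #{i | d i = 3} * (g 3 - g 1) + #{i | d i = 4} * (g 4 - g 1)) := by
  rw [sum_comp_of_mem_Icc hd g, ← card_fiber_add_of_mem_Icc hd]
  push_cast
  simp only [nsmul_eq_mul]
  ring

theorem weighted_card_fiber_eq_sub_one {n k m : ℕ} {d : Fin n → ℕ} (hd : ∀ i, d i ∈ Icc 1 4)
    (hsum : ∑ i, d i = k * m) (hn : n = m * (k - 1) + 1) :
    #{i | d i = 2} + 2 * #{i | d i = 3} + 3 * #{i | d i = 4} = m - 1 := by
  have hcard := card_fiber_add_of_mem_Icc hd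
  have hdeg := sum_comp_of_mem_Icc hd id
  simp only [id, smul_eq_mul, Fintype.card_fin] at hcard hdeg
  rcases k with _ | k
  · omega
  · have : (k + 1) * m = m * k + m := by ring
    simp only [add_tsub_cancel_right] at hn
    omega

theorem exists_perm_iff_forall_card_fiber_eq {ι κ : Type*} [Fintype ι] [DecidableEq κ]
    (d e : ι → κ) :
    (∃ σ : Equiv.Perm ι, ∀ i, d i = e (σ i)) ↔ ∀ v, #{i | d i = v} = #{i | e i = v} := by
  constructor
  · rintro ⟨σ, hσ⟩ v
    exact card_equiv σ (by simp [hσ])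
  · intro h
    refine ⟨Equiv.ofFiberEquiv fun v => Fintype.equivOfCardEq ?_,
      fun i => (Equiv.ofFiberEquiv_map _ i).symm⟩
    simpa only [Fintype.card_subtype] using h v

theorem exists_perm_iff_of_mem_Icc {ι : Type*} [Fintype ι] {d e : ι → ℕ}
    (hd : ∀ i, d i ∈ Icc 1 4) (he : ∀ i, e i ∈ Icc 1 4) :
    (∃ σ : Equiv.Perm ι, ∀ i, d i = e (σ i)) ↔
      #{i | d i = 2} = #{i | e i = 2} ∧ #{i | d i = 3} = #{i | e i = 3} ∧
        #{i | d i = 4} = #{i | e i = 4} := by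
  rw [exists_perm_iff_forall_card_fiber_eq]
  refine ⟨fun h => ⟨h 2, h 3, h 4⟩, fun ⟨h2, h3, h4⟩ v => ?_⟩
  by_cases hv : v ∈ Icc 1 4
  · have hd_card := card_fiber_add_of_mem_Icc hd
    have he_card := card_fiber_add_of_mem_Icc he
    rw [show (Icc 1 4 : Finset ℕ) = {1, 2, 3, 4} from rfl] at hv
    simp only [mem_insert, mem_singleton] at hv
    rcases hv with rfl | rfl | rfl | rfl <;> omega
  · have hempty : ∀ f : ι → ℕ, (∀ i, f i ∈ Icc 1 4) → #{i | f i = v} = 0 := fun f hf =>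
      card_eq_zero.2 (filter_eq_empty_iff.2 fun i _ h => hv (h ▸ hf i))
    rw [hempty d hd, hempty e he]

def extremalDegrees {n : ℕ} (a u : ℕ) (j : Fin n) : ℕ :=
  if (j : ℕ) < a then 4 else if (j : ℕ) = a then u else 1

theorem extremalDegrees_mem_Icc {n a u : ℕ} (hu : u ∈ Icc 1 4) (j : Fin n) :
    extremalDegrees a u j ∈ Icc 1 4 := by
  rw [mem_Icc] at hu ⊢
  unfold extremalDegrees
  split_ifs <;> omega

theorem card_extremalDegrees_eq_four {n a u : ℕ} (ha : a ≤ n) (hu : u ≠ 4) :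
    #{j : Fin n | extremalDegrees a u j = 4} = a := by
  calc _ = #{j : Fin n | (j : ℕ) < a} := by
        congr 1
        ext j
        simp only [mem_filter, mem_univ, true_and]
        unfold extremalDegrees
        split_ifs <;> omega
    _ = a := by rw [Fin.card_filter_val_lt, min_eq_right ha]

theorem card_extremalDegrees_eq_of_ne {n a u v : ℕ} (ha : a < n) (hv₁ : v ≠ 1) (hv₄ : v ≠ 4) :
    #{j : Fin n | extremalDegrees a u j = v} = if u = v then 1 else 0 := by
  split_ifs with huv
  · refine card_eq_one.2 ⟨⟨a, ha⟩, ?_⟩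
    ext j
    simp only [mem_filter, mem_univ, true_and, mem_singleton, Fin.ext_iff]
    unfold extremalDegrees
    split_ifs <;> omega
  · refine card_eq_zero.2 (filter_eq_empty_iff.2 fun j _ => ?_)
    unfold extremalDegrees
    split_ifs <;> omega

theorem exists_perm_extremalDegrees_iff {n a r : ℕ} {d : Fin n → ℕ} (hd : ∀ i, d i ∈ Icc 1 4)
    (ha : a < n) (hr : r ≤ 2) :
    (∃ σ : Equiv.Perm (Fin n), ∀ i, d i = extremalDegrees a (r + 1) (σ i)) ↔
      #{i | d i = 2} + 2 * #{i | d i = 3} = r ∧ #{i | d i = 2} ≤ 1 ∧ #{i | d i = 4} = a := by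
  rw [exists_perm_iff_of_mem_Icc hd (extremalDegrees_mem_Icc (mem_Icc.2 ⟨by omega, by omega⟩)),
    card_extremalDegrees_eq_four ha.le (by omega),
    card_extremalDegrees_eq_of_ne ha (by omega) (by omega),
    card_extremalDegrees_eq_of_ne ha (by omega) (by omega)]
  split_ifs <;> omega

theorem stmt_13_general (k m n a r : ℕ) (hk : 3 ≤ k) (hn : n = m * (k - 1) + 1)
    (hr : r ≤ 2) (hmar : m - 1 = 3 * a + r)
    (d : Fin n → ℕ) (hd : ∀ i, 1 ≤ d i ∧ d i ≤ 4) (hsum : ∑ i, d i = k * m)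
    (δ : Fin n → ℝ) (hδ : ∀ i, δ i = (d i : ℝ) * ((k : ℝ) - 1)) :
    (∑ i, δ i * Real.logb 2 (δ i) ≤
      (a : ℝ) * (4 * (k : ℝ) - 4) * Real.logb 2 (4 * (k : ℝ) - 4) +
        ((r : ℝ) + 1) * ((k : ℝ) - 1) * Real.logb 2 (((r : ℝ) + 1) * ((k : ℝ) - 1)) +
        ((n : ℝ) - (a : ℝ) - 1) * ((k : ℝ) - 1) * Real.logb 2 ((k : ℝ) - 1)) ∧
    (∑ i, δ i * Real.logb 2 (δ i) =
        (a : ℝ) * (4 * (k : ℝ) - 4) * Real.logb 2 (4 * (k : ℝ) - 4) +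
          ((r : ℝ) + 1) * ((k : ℝ) - 1) * Real.logb 2 (((r : ℝ) + 1) * ((k : ℝ) - 1)) +
          ((n : ℝ) - (a : ℝ) - 1) * ((k : ℝ) - 1) * Real.logb 2 ((k : ℝ) - 1) ↔
      ∃ σ : Equiv.Perm (Fin n), ∀ i,
        d i = if ((σ i : Fin n) : ℕ) < a then 4 else if ((σ i : Fin n) : ℕ) = a then r + 1 else 1) := by
  have hd' : ∀ i, d i ∈ Icc 1 4 := fun i => mem_Icc.2 (hd i)
  have hk' : (0 : ℝ) < k - 1 := sub_pos.2 (by exact_mod_cast (by omega : 1 < k))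
  let g : ℕ → ℝ := fun v => v * (k - 1) * logb 2 (v * (k - 1))
  let A : ℕ → ℝ := fun j => g (j + 1) - g 1
  have hconv (j : ℕ) : 2 * g (j + 1) < g j + g (j + 2) :=
    two_mul_natCast_mul_logb_lt one_lt_two hk' j
  have key := parts_sum_le_and_eq_iff (A := A) (sub_self _) (by linarith [hconv 1])
    (by linarith [hconv 2]) hr _ _ _ (weighted_card_fiber_eq_sub_one hd' hsum hn ▸ hmar)
  have hlhs : ∑ i, δ i * logb 2 (δ i) =
      n * g 1 + (#{i | d i = 2} * A 1 + #{i | d i = 3} * A 2 + #{i | d i = 4} * A 3) := by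
    simpa only [hδ, Fintype.card_fin] using sum_comp_eq_card_mul_add_of_mem_Icc hd' g
  have hrhs : (a : ℝ) * (4 * (k : ℝ) - 4) * Real.logb 2 (4 * (k : ℝ) - 4) +
        ((r : ℝ) + 1) * ((k : ℝ) - 1) * Real.logb 2 (((r : ℝ) + 1) * ((k : ℝ) - 1)) +
        ((n : ℝ) - (a : ℝ) - 1) * ((k : ℝ) - 1) * Real.logb 2 ((k : ℝ) - 1) =
      n * g 1 + (a * A 3 + A r) := by
    simp only [A, g]
    push_cast
    ring_nf
  have ha : a < n := by
    have : m ≤ m * (k - 1) := Nat.le_mul_of_pos_right _ (by omega)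
    omega
  rw [hlhs, hrhs, add_le_add_iff_left, add_right_inj, key.2]
  exact ⟨key.1, (exists_perm_extremalDegrees_iff hd' ha hr).symm⟩

/-- Lemma 3.5, sequence form: among chemical `k`-uniform hypertree degree sequences
(`n = m(k-1)+1` integers `1 ≤ dᵢ ≤ 4` with `Σ dᵢ = km`, Laplacian degrees
`δᵢ = dᵢ(k-1)`) with `m - 1 = 3a + r`, `r ∈ {0,1,2}`, one has
`Σ δᵢ log₂ δᵢ ≤ a(4k-4)log₂(4k-4) + (r+1)(k-1)log₂((r+1)(k-1)) + (n-a-1)(k-1)log₂(k-1)`,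
with equality iff `(d₁, …, dₙ)` is a permutation of the tuple with `a` entries `4`,
one entry `r + 1`, and `n - a - 1` entries `1`. -/
theorem stmt_13 (k m n a r : ℕ) (hk : 3 ≤ k) (hm : 2 ≤ m) (hn : n = m * (k - 1) + 1)
    (hr : r ≤ 2) (hmar : m - 1 = 3 * a + r)
    (d : Fin n → ℕ) (hd : ∀ i, 1 ≤ d i ∧ d i ≤ 4) (hsum : ∑ i, d i = k * m)
    (δ : Fin n → ℝ) (hδ : ∀ i, δ i = (d i : ℝ) * ((k : ℝ) - 1)) :
    (∑ i, δ i * Real.logb 2 (δ i) ≤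
      (a : ℝ) * (4 * (k : ℝ) - 4) * Real.logb 2 (4 * (k : ℝ) - 4) +
        ((r : ℝ) + 1) * ((k : ℝ) - 1) * Real.logb 2 (((r : ℝ) + 1) * ((k : ℝ) - 1)) +
        ((n : ℝ) - (a : ℝ) - 1) * ((k : ℝ) - 1) * Real.logb 2 ((k : ℝ) - 1)) ∧
    (∑ i, δ i * Real.logb 2 (δ i) =
        (a : ℝ) * (4 * (k : ℝ) - 4) * Real.logb 2 (4 * (k : ℝ) - 4) +
          ((r : ℝ) + 1) * ((k : ℝ) - 1) * Real.logb 2 (((r : ℝ) + 1) * ((k : ℝ) - 1)) +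
          ((n : ℝ) - (a : ℝ) - 1) * ((k : ℝ) - 1) * Real.logb 2 ((k : ℝ) - 1) ↔
      ∃ σ : Equiv.Perm (Fin n), ∀ i,
        d i = if ((σ i : Fin n) : ℕ) < a then 4 else if ((σ i : Fin n) : ℕ) = a then r + 1 else 1) :=
  stmt_13_general k m n a r hk hn hr hmar d hd hsum δ hδ
end

section
/- (Theorem 3.6.) Let k ≥ 3 and m ≥ 2 be integers, n = m(k − 1) + 1, and write m − 1 = 3a + r with a ≥ 0 and r ∈ {0, 1, 2}. Let (d₁, …, dₙ) be any n-tuple of integers with 1 ≤ dᵢ ≤ 4 for all i and Σᵢ dᵢ = km, set δᵢ = dᵢ(k − 1), and I_δ = log₂(k(k−1)m) − (1/(k(k−1)m))·Σᵢ δᵢ·log₂ δᵢ. Then log₂(k(k−1)m) − (1/(k(k−1)m))·[a(4k − 4)·log₂(4k − 4) + (r + 1)(k − 1)·log₂((r + 1)(k − 1)) + (n − a − 1)(k − 1)·log₂(k − 1)] ≤ I_δ ≤ log₂(k(k−1)m) − (1/(k(k−1)m))·[(m − 1)(2k − 2)·log₂(2k − 2) + (n − m + 1)(k − 1)·log₂(k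 − 1)], where the first equality holds if and only if (d₁, …, dₙ) is a permutation of the tuple with a entries equal to 4, one entry equal to r + 1 and n − a − 1 entries equal to 1, and the second equality holds if and only if (d₁, …, dₙ) is a permutation of the tuple with m − 1 entries equal to 2 and n − m + 1 entries equal to 1. -/
/-!
Since `δᵢ = (k - 1) dᵢ` and `∑ dᵢ = k m`, the entropy `I_δ` is a strictly decreasing function
of `F = ∑ dᵢ log₂ dᵢ` alone. If `x, y, z` count the entries `2, 3, 4`, then
`F = 2x + 3 log₂ 3 · y + 8z` with `x + 2y + 3z = m - 1`. Per unit of `dᵢ - 1` an entry `2`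
contributes `2`, an entry `3` contributes `(3/2) log₂ 3` and an entry `4` contributes `8/3`, so
`F ≥ 2(m - 1)` with equality only for entries `≤ 2`, while `F` is largest when all but one of
the entries `> 1` are `4`; because `4/3 < log₂ 3 < 5/3`, any other distribution of the remainder `r`
loses.
-/

open Finset Real

lemma logb_two_three_bounds : 4 / 3 < logb 2 3 ∧ logb 2 3 < 5 / 3 := by
  have h27 : logb 2 27 = 3 * logb 2 3 := by
    rw [show (27 : ℝ) = 3 ^ 3 by norm_num, logb_pow]; norm_num
  have hpow (e : ℕ) : logb 2 (2 ^ e) = e := by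
    rw [logb_pow, logb_self_eq_one one_lt_two, mul_one]
  have h16 := logb_lt_logb one_lt_two (by norm_num) (show (2 : ℝ) ^ 4 < 27 by norm_num)
  have h32 := logb_lt_logb one_lt_two (by norm_num) (show (27 : ℝ) < 2 ^ 5 by norm_num)
  rw [hpow] at h16 h32
  push_cast at h16 h32
  constructor <;> linarith

lemma logb_two_four : logb 2 4 = 2 := by
  rw [show (4 : ℝ) = 2 ^ 2 by norm_num, logb_pow, logb_self_eq_one one_lt_two]; norm_num

lemma mul_mul_logb_mul (b x c : ℝ) (hc : c ≠ 0) :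
    x * c * logb b (x * c) = c * (x * logb b x) + x * (c * logb b c) := by
  rcases eq_or_ne x 0 with rfl | hx
  · simp
  · rw [logb_mul hx hc]; ring

section DegreeCounts

variable {ι : Type*} [Fintype ι]

lemma sum_mul_mul_logb_mul (b c : ℝ) (hc : c ≠ 0) (d : ι → ℕ) :
    ∑ i, (d i : ℝ) * c * logb b (d i * c) =
      c * (logb b c * ∑ i, (d i : ℝ) + ∑ i, d i * logb b (d i)) := by
  simp only [mul_mul_logb_mul b _ c hc, sum_add_distrib, ← mul_sum, ← sum_mul]
  ring

lemma sum_comp_eq_of_mem_Icc_one_four {M : Type*} [AddCommMonoid M] (d : ι → ℕ)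
    (hd : ∀ i, 1 ≤ d i ∧ d i ≤ 4) (F : ℕ → M) :
    ∑ i, F (d i) = #{i | d i = 1} • F 1 + #{i | d i = 2} • F 2 + #{i | d i = 3} • F 3
      + #{i | d i = 4} • F 4 := by
  have hfiber (j : ℕ) : ∑ i with d i = j, F (d i) = #{i | d i = j} • F j := by
    rw [← sum_const]
    exact sum_congr rfl fun i hi => by rw [(mem_filter.1 hi).2]
  rw [← sum_fiberwise_of_maps_to (t := Icc 1 4) (fun i _ => mem_Icc.2 (hd i))]
  simp only [hfiber]
  rw [show Icc 1 4 = {1, 2, 3, 4} from rfl, sum_insert (by decide), sum_insert (by decide),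
    sum_insert (by decide), sum_singleton]
  abel

lemma card_eq_sum_card_filter_eq_of_mem_Icc_one_four (d : ι → ℕ)
    (hd : ∀ i, 1 ≤ d i ∧ d i ≤ 4) :
    Fintype.card ι = #{i | d i = 1} + #{i | d i = 2} + #{i | d i = 3} + #{i | d i = 4} := by
  simpa using sum_comp_eq_of_mem_Icc_one_four d hd fun _ => (1 : ℕ)

lemma sum_eq_card_add_of_mem_Icc_one_four (d : ι → ℕ) (hd : ∀ i, 1 ≤ d i ∧ d i ≤ 4) :
    ∑ i, d i = Fintype.card ι + (#{i | d i = 2} + 2 * #{i | d i = 3} + 3 * #{i | d i = 4}) := by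
  have hsum := sum_comp_eq_of_mem_Icc_one_four d hd id
  simp only [id, smul_eq_mul] at hsum
  rw [hsum, card_eq_sum_card_filter_eq_of_mem_Icc_one_four d hd]
  ring

noncomputable def sumMulLogbOfCounts (x y z : ℕ) : ℝ :=
  2 * x + 3 * logb 2 3 * y + 8 * z

lemma sum_mul_logb_eq_of_mem_Icc_one_four (d : ι → ℕ) (hd : ∀ i, 1 ≤ d i ∧ d i ≤ 4) :
    ∑ i, (d i : ℝ) * logb 2 (d i) =
      sumMulLogbOfCounts #{i | d i = 2} #{i | d i = 3} #{i | d i = 4} := by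
  rw [sum_comp_eq_of_mem_Icc_one_four d hd fun j => (j : ℝ) * logb 2 j]
  simp [sumMulLogbOfCounts, logb_two_four]
  ring

lemma exists_perm_eq_comp_iff {β : Type*} [DecidableEq β] (f g : ι → β) :
    (∃ σ : Equiv.Perm ι, ∀ i, f i = g (σ i)) ↔ ∀ j, #{i | f i = j} = #{i | g i = j} := by
  simp only [← Fintype.card_subtype]
  constructor
  · rintro ⟨σ, hσ⟩ j
    exact Fintype.card_congr (σ.subtypeEquiv fun i => by rw [hσ])
  · intro h
    exact ⟨Equiv.ofFiberEquiv fun j => Fintype.equivOfCardEq (h j),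
      fun i => (Equiv.ofFiberEquiv_map _ i).symm⟩

lemma exists_perm_eq_comp_iff_of_mem_Icc_one_four (f g : ι → ℕ)
    (hf : ∀ i, 1 ≤ f i ∧ f i ≤ 4) (hg : ∀ i, 1 ≤ g i ∧ g i ≤ 4) :
    (∃ σ : Equiv.Perm ι, ∀ i, f i = g (σ i)) ↔ #{i | f i = 2} = #{i | g i = 2} ∧
      #{i | f i = 3} = #{i | g i = 3} ∧ #{i | f i = 4} = #{i | g i = 4} := by
  rw [exists_perm_eq_comp_iff]
  refine ⟨fun h => ⟨h 2, h 3, h 4⟩, fun ⟨h2, h3, h4⟩ j => ?_⟩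
  have hf_card := card_eq_sum_card_filter_eq_of_mem_Icc_one_four f hf
  have hg_card := card_eq_sum_card_filter_eq_of_mem_Icc_one_four g hg
  obtain rfl | rfl | rfl | rfl | hj : j = 1 ∨ j = 2 ∨ j = 3 ∨ j = 4 ∨ (j = 0 ∨ 5 ≤ j) := by
    omega
  · omega
  · exact h2
  · exact h3
  · exact h4
  · have hempty (d : ι → ℕ) (hd : ∀ i, 1 ≤ d i ∧ d i ≤ 4) : #{i | d i = j} = 0 :=
      card_eq_zero.2 <| filter_eq_empty_iff.2 fun i _ => by have := hd i; omega
    rw [hempty f hf, hempty g hg]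

end DegreeCounts

lemma Fin.card_filter_val_eq {n a : ℕ} (ha : a < n) : #{i : Fin n | (i : ℕ) = a} = 1 :=
  card_eq_one.2 ⟨⟨a, ha⟩, by ext; simp [Fin.ext_iff]⟩

lemma exists_perm_eq_two_one_iff {n b : ℕ} (hb : b ≤ n) (d : Fin n → ℕ)
    (hd : ∀ i, 1 ≤ d i ∧ d i ≤ 4) :
    (∃ σ : Equiv.Perm (Fin n), ∀ i, d i = if ((σ i : Fin n) : ℕ) < b then 2 else 1) ↔
      #{i | d i = 2} = b ∧ #{i | d i = 3} = 0 ∧ #{i | d i = 4} = 0 := by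
  set t : Fin n → ℕ := fun j => if (j : ℕ) < b then 2 else 1
  have ht2 : #{j | t j = 2} = b := by
    rw [filter_congr (q := fun j : Fin n => (j : ℕ) < b)
      fun j _ => by simp only [t]; split_ifs <;> omega, Fin.card_filter_val_lt, min_eq_right hb]
  have ht (v : ℕ) (hv : v = 3 ∨ v = 4) : #{j | t j = v} = 0 :=
    card_eq_zero.2 <| filter_eq_empty_iff.2 fun j _ => by simp only [t]; split_ifs <;> omega
  refine (exists_perm_eq_comp_iff_of_mem_Icc_one_four d t hd
    fun j => by simp only [t]; split_ifs <;> omega).trans ?_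
  rw [ht2, ht 3 (by simp), ht 4 (by simp)]

lemma exists_perm_eq_four_succ_one_iff {n a r : ℕ} (ha : a < n) (hr : r ≤ 2) (d : Fin n → ℕ)
    (hd : ∀ i, 1 ≤ d i ∧ d i ≤ 4) :
    (∃ σ : Equiv.Perm (Fin n), ∀ i, d i =
        if ((σ i : Fin n) : ℕ) < a then 4 else if ((σ i : Fin n) : ℕ) = a then r + 1 else 1) ↔
      #{i | d i = 2} = (if r = 1 then 1 else 0) ∧ #{i | d i = 3} = (if r = 2 then 1 else 0) ∧
        #{i | d i = 4} = a := by
  set t : Fin n → ℕ := fun j => if (j : ℕ) < a then 4 else if (j : ℕ) = a then r + 1 else 1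
  have ht4 : #{j | t j = 4} = a := by
    rw [filter_congr (q := fun j : Fin n => (j : ℕ) < a)
      fun j _ => by simp only [t]; split_ifs <;> omega, Fin.card_filter_val_lt, min_eq_right ha.le]
  have ht (v : ℕ) (hv : v = 2 ∨ v = 3) : #{j | t j = v} = if r + 1 = v then 1 else 0 := by
    split_ifs with hrv
    · rw [filter_congr (q := fun j : Fin n => (j : ℕ) = a)
        fun j _ => by simp only [t]; split_ifs <;> omega, Fin.card_filter_val_eq ha]
    · exact card_eq_zero.2 <| filter_eq_empty_iff.2 fun j _ => by simp only [t]; split_ifs <;> omega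
  refine (exists_perm_eq_comp_iff_of_mem_Icc_one_four d t hd
    fun j => by simp only [t]; split_ifs <;> omega).trans ?_
  rw [ht4, ht 2 (by simp), ht 3 (by simp)]
  simp

lemma sumMulLogbOfCounts_ge {x y z s : ℕ} (h : x + 2 * y + 3 * z = s) :
    sumMulLogbOfCounts s 0 0 ≤ sumMulLogbOfCounts x y z ∧
      (sumMulLogbOfCounts x y z = sumMulLogbOfCounts s 0 0 ↔ x = s ∧ y = 0 ∧ z = 0) := by
  have hdiff : sumMulLogbOfCounts x y z - sumMulLogbOfCounts s 0 0
      = (3 * logb 2 3 - 4) * y + 2 * z := by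
    simp only [sumMulLogbOfCounts, ← h]; push_cast; ring
  have hlog3 := logb_two_three_bounds.1
  have hy : (0 : ℝ) ≤ y := y.cast_nonneg
  have hz : (0 : ℝ) ≤ z := z.cast_nonneg
  refine ⟨by nlinarith, fun heq => ?_, ?_⟩
  · have hy0 : (y : ℝ) = 0 := by nlinarith
    have hz0 : (z : ℝ) = 0 := by nlinarith
    norm_cast at hy0 hz0
    omega
  · rintro ⟨rfl, rfl, rfl⟩; rfl

lemma sumMulLogbOfCounts_le {x y z a r : ℕ} (hr : r ≤ 2) (h : x + 2 * y + 3 * z = 3 * a + r) :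
    sumMulLogbOfCounts x y z ≤
        sumMulLogbOfCounts (if r = 1 then 1 else 0) (if r = 2 then 1 else 0) a ∧
      (sumMulLogbOfCounts x y z =
          sumMulLogbOfCounts (if r = 1 then 1 else 0) (if r = 2 then 1 else 0) a ↔
        x = (if r = 1 then 1 else 0) ∧ y = (if r = 2 then 1 else 0) ∧ z = a) := by
  by_cases hxy : x + y ≤ 1
  · obtain ⟨rfl, rfl⟩ : r = x + 2 * y ∧ z = a := by omega
    obtain ⟨rfl, rfl⟩ | ⟨rfl, rfl⟩ | ⟨rfl, rfl⟩ :
        (x = 0 ∧ y = 0) ∨ (x = 1 ∧ y = 0) ∨ (x = 0 ∧ y = 1) := by omega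
    all_goals simp
  · obtain ⟨hlog3₁, hlog3₂⟩ := logb_two_three_bounds
    have hlt : sumMulLogbOfCounts x y z <
        sumMulLogbOfCounts (if r = 1 then 1 else 0) (if r = 2 then 1 else 0) a := by
      have hz : (3 * z + x + 2 * y : ℝ) = 3 * a + r := by
        exact_mod_cast (by omega : 3 * z + x + 2 * y = 3 * a + r)
      have hy : (0 : ℝ) ≤ y := y.cast_nonneg
      have hxy' : (2 : ℝ) ≤ x + y := by exact_mod_cast (by omega : 2 ≤ x + y)
      interval_cases r <;> norm_num [sumMulLogbOfCounts] at hz ⊢ <;>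
        nlinarith [mul_nonneg hy (by linarith : (0 : ℝ) ≤ 5 / 3 - logb 2 3),
          mul_nonneg hy (by linarith : (0 : ℝ) ≤ logb 2 3 - 4 / 3)]
    refine ⟨hlt.le, fun heq => absurd heq hlt.ne, fun ⟨hx', hy', hz'⟩ => ?_⟩
    split_ifs at hx' hy' <;> omega

/-- `I_δ` as a function of `F = ∑ dᵢ log₂ dᵢ`, using `δᵢ = (k - 1) dᵢ` and `∑ dᵢ = k m`. -/
noncomputable def entropyOfSumMulLogb (k m : ℕ) (F : ℝ) : ℝ :=
  logb 2 (k * (k - 1) * m) - 1 / (k * (k - 1) * m) * ((k - 1) * (logb 2 (k - 1) * (k * m) + F))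

lemma entropyOfSumMulLogb_strictAnti {k m : ℕ} (hk : 2 ≤ k) (hm : 1 ≤ m) :
    StrictAnti (entropyOfSumMulLogb k m) := by
  have hk' : (1 : ℝ) < k := by exact_mod_cast hk
  have hm' : (0 : ℝ) < m := by exact_mod_cast hm
  intro F G hFG
  unfold entropyOfSumMulLogb
  gcongr

lemma laplacian_sum_mul_logb_eq {ι : Type*} [Fintype ι] {k m : ℕ} (hk : 2 ≤ k) (d : ι → ℕ)
    (hd : ∀ i, 1 ≤ d i ∧ d i ≤ 4) (hsum : ∑ i, d i = k * m) :
    ∑ i, (d i : ℝ) * ((k : ℝ) - 1) * logb 2 ((d i : ℝ) * ((k : ℝ) - 1)) =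
      ((k : ℝ) - 1) * (logb 2 ((k : ℝ) - 1) * (k * m) +
        sumMulLogbOfCounts #{i | d i = 2} #{i | d i = 3} #{i | d i = 4}) := by
  have hc : (k : ℝ) - 1 ≠ 0 := sub_ne_zero.2 (by exact_mod_cast (by omega : k ≠ 1))
  rw [sum_mul_mul_logb_mul 2 _ hc, ← Nat.cast_sum, hsum,
    sum_mul_logb_eq_of_mem_Icc_one_four d hd]
  push_cast; rfl

lemma laplacian_sum_mul_logb_four_succ_one {k m n a r : ℕ} (hk : 2 ≤ k) (hm : 1 ≤ m)
    (hn : n = m * (k - 1) + 1) (hr : r ≤ 2) (hmar : m - 1 = 3 * a + r) :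
    (a : ℝ) * (4 * k - 4) * logb 2 (4 * k - 4) +
        ((r : ℝ) + 1) * ((k : ℝ) - 1) * logb 2 (((r : ℝ) + 1) * ((k : ℝ) - 1)) +
        ((n : ℝ) - a - 1) * ((k : ℝ) - 1) * logb 2 ((k : ℝ) - 1) =
      ((k : ℝ) - 1) * (logb 2 ((k : ℝ) - 1) * (k * m) +
        sumMulLogbOfCounts (if r = 1 then 1 else 0) (if r = 2 then 1 else 0) a) := by
  have hc : (k : ℝ) - 1 ≠ 0 := sub_ne_zero.2 (by exact_mod_cast (by omega : k ≠ 1))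
  have hn' : (n : ℝ) = m * ((k : ℝ) - 1) + 1 := by
    rw [hn]; push_cast [show 1 ≤ k by omega]; ring
  have hm' : (m : ℝ) = 3 * a + r + 1 := by exact_mod_cast (by omega : m = 3 * a + r + 1)
  rw [show 4 * (k : ℝ) - 4 = 4 * ((k : ℝ) - 1) by ring, mul_assoc (a : ℝ),
    mul_mul_logb_mul _ _ _ hc, mul_mul_logb_mul _ _ _ hc, hn']
  interval_cases r <;> norm_num [sumMulLogbOfCounts, logb_two_four, hm'] <;> ring

lemma laplacian_sum_mul_logb_two_one {k m n : ℕ} (hk : 2 ≤ k) (hm : 1 ≤ m)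
    (hn : n = m * (k - 1) + 1) :
    ((m : ℝ) - 1) * (2 * k - 2) * logb 2 (2 * k - 2) +
        ((n : ℝ) - m + 1) * ((k : ℝ) - 1) * logb 2 ((k : ℝ) - 1) =
      ((k : ℝ) - 1) * (logb 2 ((k : ℝ) - 1) * (k * m) + sumMulLogbOfCounts (m - 1) 0 0) := by
  have hc : (k : ℝ) - 1 ≠ 0 := sub_ne_zero.2 (by exact_mod_cast (by omega : k ≠ 1))
  have hn' : (n : ℝ) = m * ((k : ℝ) - 1) + 1 := by
    rw [hn]; push_cast [show 1 ≤ k by omega]; ring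
  rw [show 2 * (k : ℝ) - 2 = 2 * ((k : ℝ) - 1) by ring, mul_assoc ((m : ℝ) - 1),
    mul_mul_logb_mul _ _ _ hc, hn', logb_self_eq_one one_lt_two]
  simp [sumMulLogbOfCounts, hm]
  ring

/-- Theorem 3.6: among chemical `k`-uniform hypertree degree sequences
(`n = m(k-1)+1` integers `1 ≤ dᵢ ≤ 4` with `Σ dᵢ = km`, Laplacian degrees
`δᵢ = dᵢ(k-1)`) with `m - 1 = 3a + r`, `r ∈ {0,1,2}`, the entropy `I_δ` lies between
the value of the extremal chemical hypertree family `T*` and the loose-path value,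
with the stated equality characterizations. -/
theorem stmt_14 (k m n a r : ℕ) (hk : 3 ≤ k) (hm : 2 ≤ m) (hn : n = m * (k - 1) + 1)
    (hr : r ≤ 2) (hmar : m - 1 = 3 * a + r)
    (d : Fin n → ℕ) (hd : ∀ i, 1 ≤ d i ∧ d i ≤ 4) (hsum : ∑ i, d i = k * m)
    (δ : Fin n → ℝ) (hδ : ∀ i, δ i = (d i : ℝ) * ((k : ℝ) - 1))
    (Iδ : ℝ)
    (hI : Iδ = Real.logb 2 ((k : ℝ) * ((k : ℝ) - 1) * (m : ℝ)) -
      (1 / ((k : ℝ) * ((k : ℝ) - 1) * (m : ℝ))) * ∑ i, δ i * Real.logb 2 (δ i))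
    (Blow : ℝ)
    (hBlow : Blow = Real.logb 2 ((k : ℝ) * ((k : ℝ) - 1) * (m : ℝ)) -
      (1 / ((k : ℝ) * ((k : ℝ) - 1) * (m : ℝ))) *
        ((a : ℝ) * (4 * (k : ℝ) - 4) * Real.logb 2 (4 * (k : ℝ) - 4) +
          ((r : ℝ) + 1) * ((k : ℝ) - 1) * Real.logb 2 (((r : ℝ) + 1) * ((k : ℝ) - 1)) +
          ((n : ℝ) - (a : ℝ) - 1) * ((k : ℝ) - 1) * Real.logb 2 ((k : ℝ) - 1)))
    (Bhigh : ℝ)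
    (hBhigh : Bhigh = Real.logb 2 ((k : ℝ) * ((k : ℝ) - 1) * (m : ℝ)) -
      (1 / ((k : ℝ) * ((k : ℝ) - 1) * (m : ℝ))) *
        (((m : ℝ) - 1) * (2 * (k : ℝ) - 2) * Real.logb 2 (2 * (k : ℝ) - 2) +
          ((n : ℝ) - (m : ℝ) + 1) * ((k : ℝ) - 1) * Real.logb 2 ((k : ℝ) - 1))) :
    (Blow ≤ Iδ ∧ Iδ ≤ Bhigh) ∧
    (Iδ = Blow ↔ ∃ σ : Equiv.Perm (Fin n), ∀ i,
      d i = if ((σ i : Fin n) : ℕ) < a then 4 else if ((σ i : Fin n) : ℕ) = a then r + 1 else 1) ∧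
    (Iδ = Bhigh ↔ ∃ σ : Equiv.Perm (Fin n), ∀ i,
      d i = if ((σ i : Fin n) : ℕ) < m - 1 then 2 else 1) := by
  have hk2 : 2 ≤ k := by omega
  have hm1 : 1 ≤ m := by omega
  have hkm : k * m = m * (k - 1) + m := by
    rw [← Nat.mul_add_one, Nat.sub_add_cancel (by omega), mul_comm]
  have hcounts : #{i | d i = 2} + 2 * #{i | d i = 3} + 3 * #{i | d i = 4} = m - 1 := by
    have := sum_eq_card_add_of_mem_Icc_one_four d hd
    rw [hsum, Fintype.card_fin] at this
    omega
  have hIδ : Iδ = entropyOfSumMulLogb k m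
      (sumMulLogbOfCounts #{i | d i = 2} #{i | d i = 3} #{i | d i = 4}) := by
    simp only [hI, hδ, laplacian_sum_mul_logb_eq hk2 d hd hsum]; rfl
  have hBlow' : Blow = entropyOfSumMulLogb k m
      (sumMulLogbOfCounts (if r = 1 then 1 else 0) (if r = 2 then 1 else 0) a) := by
    rw [hBlow, laplacian_sum_mul_logb_four_succ_one hk2 hm1 hn hr hmar]; rfl
  have hBhigh' : Bhigh = entropyOfSumMulLogb k m (sumMulLogbOfCounts (m - 1) 0 0) := by
    rw [hBhigh, laplacian_sum_mul_logb_two_one hk2 hm1 hn]; rfl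
  have hanti := entropyOfSumMulLogb_strictAnti hk2 hm1
  have hmn : m ≤ m * (k - 1) := Nat.le_mul_of_pos_right m (by omega)
  rw [hIδ, hBlow', hBhigh', hanti.le_iff_ge, hanti.le_iff_ge, hanti.injective.eq_iff,
    hanti.injective.eq_iff, exists_perm_eq_four_succ_one_iff (by omega) hr d hd,
    exists_perm_eq_two_one_iff (by omega) d hd]
  obtain ⟨hle_low, heq_low⟩ := sumMulLogbOfCounts_le hr (hcounts.trans hmar)
  obtain ⟨hle_high, heq_high⟩ := sumMulLogbOfCounts_ge hcounts
  exact ⟨⟨hle_low, hle_high⟩, heq_low, heq_high⟩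
end
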